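/- arXiv:math/0510249 — 4 statements merged into one kernel-verified Lean document; each statement's English description precedes it below -/
import Mathlib

section
/- Let θ ∈ [0, π/2] and r ≥ 0, and set t = r·e^{−iθ}. Then (2/3)·sin^{3/2}(θ) ≤ |ξ(t)|, and moreover if |t − 1| ≤ 1, then (2/3)·|t − 1|^{3/2} ≤ |ξ(t)| ≤ 2·|t − 1|^{3/2}. -/
open Complex Real

/-- The branch `R(t) = √(t-1)·√(t+1)` with principal complex square roots. -/
noncomputable def Rb (t : ℂ) : ℂ := (t - 1) ^ ((1 : ℂ)/2) * (t + 1) ^ ((1 : ℂ)/2)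

/-- `ξ(t) = (1/2)(t·R(t) − Log(t + R(t)))` with the principal logarithm. -/
noncomputable def xi (t : ℂ) : ℂ := (1/2 : ℂ) * (t * Rb t - Complex.log (t + Rb t))

/-!
Write `t = 1 + z` with `Re z ≥ -1`. Along the segment `u ↦ 1 + u z`, `u ∈ [0, 1]`, the function
`ξ` has derivative `z R(1 + u z)` in `u`: this only uses `R² = t² - 1` and the fact that
`t + R(t)` never meets the cut of `log`. Since `R(1 + u z) = √u · z^{1/2} · (2 + u z)^{1/2}`,
this gives `ξ(1 + z) = z · z^{1/2} · ∫₀¹ √u (2 + u z)^{1/2} du`. As `Re (2 + u z) ≥ 1`, the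
integrand has real part at least `√u`, so the integral has norm at least `∫₀¹ √u = 2/3`, and
its norm is at most `(2/3) √(2 + |z|)`.
-/

open Filter Topology Set

namespace Complex

lemma cpow_half_sq (z : ℂ) : (z ^ ((1 : ℂ) / 2)) ^ 2 = z := by
  rw [one_div, cpow_ofNat_inv_pow]

lemma norm_cpow_half (z : ℂ) : ‖z ^ ((1 : ℂ) / 2)‖ = √‖z‖ := by
  rw [show (1 : ℂ) / 2 = ((1 / 2 : ℝ) : ℂ) by push_cast; rfl, norm_cpow_real, Real.sqrt_eq_rpow]

lemma sqrt_re_le_re_cpow_half (z : ℂ) : √z.re ≤ (z ^ ((1 : ℂ) / 2)).re := by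
  rw [one_div, cpow_inv_two_re]
  exact Real.sqrt_le_sqrt (by linarith [re_le_norm z])

lemma ofReal_mul_cpow {u : ℝ} (hu : 0 ≤ u) (z w : ℂ) :
    ((u : ℂ) * z) ^ w = (u : ℂ) ^ w * z ^ w := by
  rcases hu.eq_or_lt with rfl | hu
  · rcases eq_or_ne w 0 with rfl | hw <;> simp [zero_cpow, *]
  rcases eq_or_ne z 0 with rfl | hz
  · rcases eq_or_ne w 0 with rfl | hw <;> simp [zero_cpow, *]
  have hu' : (u : ℂ) ≠ 0 := ofReal_ne_zero.mpr hu.ne'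
  rw [cpow_def_of_ne_zero (mul_ne_zero hu' hz), log_ofReal_mul hu hz, ofReal_log hu.le, add_mul,
    exp_add, ← cpow_def_of_ne_zero hu', ← cpow_def_of_ne_zero hz]

lemma ofReal_cpow_half {u : ℝ} (hu : 0 ≤ u) : (u : ℂ) ^ ((1 : ℂ) / 2) = √u := by
  rw [Real.sqrt_eq_rpow, ofReal_cpow hu]
  push_cast
  rfl

/-- A negative real value `s = p + q` would give `p - q = 1/s` and so `2 p = s + 1/s ≤ -2`. -/
lemma add_mem_slitPlane_of_sq_eq {p q : ℂ} (hpq : q ^ 2 = p ^ 2 - 1) (hp : -1 < p.re) :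
    p + q ∈ slitPlane := by
  rw [mem_slitPlane_iff]
  by_contra! h
  have hprod : ((p + q) * (p - q)).re = 1 := by
    rw [show (p + q) * (p - q) = 1 by linear_combination -hpq, one_re]
  rw [mul_re, h.2, zero_mul, sub_zero] at hprod
  have hsum : 2 * p.re = (p + q).re + (p - q).re := by simp only [add_re, sub_re]; ring
  have hneg : (p - q).re < 0 := by nlinarith
  nlinarith [sq_nonneg ((p + q).re - (p - q).re)]

end Complex

theorem hasDerivAt_half_mul_sub_log {p q : ℝ → ℂ} {p' q' : ℂ} {u : ℝ}
    (hp : HasDerivAt p p' u) (hq : HasDerivAt q q' u)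
    (hpq : ∀ᶠ v in 𝓝 u, q v ^ 2 = p v ^ 2 - 1) (hq0 : q u ≠ 0)
    (hslit : p u + q u ∈ slitPlane) :
    HasDerivAt (fun v ↦ (1 / 2 : ℂ) * (p v * q v - log (p v + q v))) (p' * q u) u := by
  have hsq : q u ^ 2 = p u ^ 2 - 1 := hpq.self_of_nhds
  have hq' : q' = p u * p' / q u := by
    have hderiv_sq := (hq.pow 2).unique (((hp.pow 2).sub_const 1).congr_of_eventuallyEq hpq)
    simp only [Nat.cast_ofNat, Nat.add_one_sub_one, pow_one] at hderiv_sq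
    field_simp
    linear_combination hderiv_sq / 2
  have hsum : p u + q u ≠ 0 := slitPlane_ne_zero hslit
  refine (((hp.fun_mul hq).fun_sub ((hp.fun_add hq).clog_real hslit)).const_mul
    (1 / 2 : ℂ)).congr_deriv ?_
  rw [hq']
  field_simp
  linear_combination -p' * (p u + q u) * hsq

lemma Rb_sq (t : ℂ) : Rb t ^ 2 = t ^ 2 - 1 := by
  rw [Rb, mul_pow, cpow_half_sq, cpow_half_sq]
  ring

lemma add_Rb_mem_slitPlane {t : ℂ} (ht : -1 < t.re) : t + Rb t ∈ slitPlane :=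
  add_mem_slitPlane_of_sq_eq (Rb_sq t) ht

lemma xi_one : xi 1 = 0 := by
  simp [xi, Rb]

lemma Rb_one_add_ofReal_mul (z : ℂ) {u : ℝ} (hu : 0 ≤ u) :
    Rb (1 + u * z) = √u * z ^ ((1 : ℂ) / 2) * (2 + u * z) ^ ((1 : ℂ) / 2) := by
  rw [Rb, show 1 + (u : ℂ) * z - 1 = u * z by ring, show 1 + (u : ℂ) * z + 1 = 2 + u * z by ring,
    ofReal_mul_cpow hu, ofReal_cpow_half hu]

section Segment

variable {z : ℂ} {u : ℝ}

lemma neg_one_lt_re_one_add_mul (hz : -1 ≤ z.re) (hu : u ∈ Icc (0 : ℝ) 1) :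
    -1 < (1 + u * z).re := by
  simp only [add_re, one_re, re_ofReal_mul]
  nlinarith [hu.1, hu.2]

lemma one_le_re_two_add_mul (hz : -1 ≤ z.re) (hu : u ∈ Icc (0 : ℝ) 1) :
    1 ≤ (2 + u * z).re := by
  simp only [add_re, re_ofReal_mul]
  norm_num
  nlinarith [hu.1, hu.2]

lemma two_add_mul_mem_slitPlane (hz : -1 ≤ z.re) (hu : u ∈ Icc (0 : ℝ) 1) :
    2 + u * z ∈ slitPlane :=
  mem_slitPlane_iff.mpr (.inl (by linarith [one_le_re_two_add_mul hz hu]))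

lemma continuousOn_sqrt_mul_cpow_half (hz : -1 ≤ z.re) :
    ContinuousOn (fun v : ℝ ↦ (√v : ℂ) * (2 + v * z) ^ ((1 : ℂ) / 2)) (Icc 0 1) := by
  have := ContinuousOn.cpow_const (b := (1 : ℂ) / 2) (s := Icc (0 : ℝ) 1)
    (f := fun v : ℝ ↦ 2 + v * z) (by fun_prop) fun v hv ↦ two_add_mul_mem_slitPlane hz hv
  fun_prop

lemma continuousOn_Rb_one_add_mul (hz : -1 ≤ z.re) :
    ContinuousOn (fun v : ℝ ↦ Rb (1 + v * z)) (Icc 0 1) := by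
  refine ((continuousOn_sqrt_mul_cpow_half hz).mul_const (z ^ ((1 : ℂ) / 2))).congr
    fun v hv ↦ ?_
  rw [Rb_one_add_ofReal_mul z hv.1]
  ring

lemma continuousOn_xi_one_add_mul (hz : -1 ≤ z.re) :
    ContinuousOn (fun v : ℝ ↦ xi (1 + v * z)) (Icc 0 1) := by
  have hRb := continuousOn_Rb_one_add_mul hz
  have hlog := ContinuousOn.clog (by fun_prop) fun v hv ↦
    add_Rb_mem_slitPlane (neg_one_lt_re_one_add_mul hz hv)
  unfold xi
  fun_prop

lemma hasDerivAt_xi_one_add_mul (hz : -1 ≤ z.re) (hz0 : z ≠ 0) (hu : u ∈ Ioo (0 : ℝ) 1) :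
    HasDerivAt (fun v : ℝ ↦ xi (1 + v * z)) (z * Rb (1 + u * z)) u := by
  have hu' := Ioo_subset_Icc_self hu
  have hp : HasDerivAt (fun v : ℝ ↦ 1 + v * z) z u :=
    (((hasDerivAt_id u).ofReal_comp.mul_const z).const_add 1).congr_deriv (by simp)
  have hq : DifferentiableAt ℝ (fun v : ℝ ↦ Rb (1 + v * z)) u := by
    have := two_add_mul_mem_slitPlane hz hu'
    have hform : DifferentiableAt ℝ
        (fun v : ℝ ↦ √v * z ^ ((1 : ℂ) / 2) * (2 + v * z) ^ ((1 : ℂ) / 2)) u := by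
      fun_prop (disch := first | exact hu.1.ne' | exact this)
    exact hform.congr_of_eventuallyEq <| by
      filter_upwards [Ici_mem_nhds hu.1] with v hv using Rb_one_add_ofReal_mul z hv
  have hRb0 : Rb (1 + u * z) ≠ 0 := by
    rw [Rb_one_add_ofReal_mul z hu'.1]
    exact mul_ne_zero (mul_ne_zero (ofReal_ne_zero.mpr (Real.sqrt_ne_zero'.mpr hu.1))
      (by simp [hz0])) (by simpa using slitPlane_ne_zero (two_add_mul_mem_slitPlane hz hu'))
  exact hasDerivAt_half_mul_sub_log hp hq.hasDerivAt (.of_forall fun v ↦ Rb_sq _) hRb0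
    (add_Rb_mem_slitPlane (neg_one_lt_re_one_add_mul hz hu'))

theorem xi_one_add_eq_integral (hz : -1 ≤ z.re) :
    xi (1 + z) = ∫ u in (0 : ℝ)..1, z * Rb (1 + u * z) := by
  rcases eq_or_ne z 0 with rfl | hz0
  · simp [xi_one]
  have hFTC := intervalIntegral.integral_eq_sub_of_hasDerivAt_of_le zero_le_one
    (continuousOn_xi_one_add_mul hz) (fun u hu ↦ hasDerivAt_xi_one_add_mul hz hz0 hu)
    (((continuousOn_Rb_one_add_mul hz).const_smul z).intervalIntegrable_of_Icc zero_le_one)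
  simpa [xi_one] using hFTC.symm

theorem xi_one_add_eq_mul_integral (hz : -1 ≤ z.re) :
    xi (1 + z) = z * z ^ ((1 : ℂ) / 2) *
      ∫ u in (0 : ℝ)..1, (√u : ℂ) * (2 + u * z) ^ ((1 : ℂ) / 2) := by
  rw [xi_one_add_eq_integral hz, ← intervalIntegral.integral_const_mul]
  refine intervalIntegral.integral_congr fun u hu ↦ ?_
  rw [uIcc_of_le zero_le_one] at hu
  simp only [Rb_one_add_ofReal_mul z hu.1]
  ring

end Segment

lemma integral_sqrt_zero_one : ∫ u in (0 : ℝ)..1, √u = 2 / 3 := by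
  simp_rw [Real.sqrt_eq_rpow]
  rw [integral_rpow (.inl (by norm_num))]
  norm_num

theorem two_thirds_le_norm_integral {z : ℂ} (hz : -1 ≤ z.re) :
    2 / 3 ≤ ‖∫ u in (0 : ℝ)..1, (√u : ℂ) * (2 + u * z) ^ ((1 : ℂ) / 2)‖ := by
  have hcont := continuousOn_sqrt_mul_cpow_half hz
  calc (2 / 3 : ℝ) = ∫ u in (0 : ℝ)..1, √u := integral_sqrt_zero_one.symm
    _ ≤ ∫ u in (0 : ℝ)..1, ((√u : ℂ) * (2 + u * z) ^ ((1 : ℂ) / 2)).re := by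
        refine intervalIntegral.integral_mono_on zero_le_one
          (Real.continuous_sqrt.intervalIntegrable _ _)
          ((continuous_re.comp_continuousOn hcont).intervalIntegrable_of_Icc zero_le_one)
          fun u hu ↦ ?_
        rw [re_ofReal_mul]
        refine le_mul_of_one_le_right (Real.sqrt_nonneg u) ?_
        calc (1 : ℝ) ≤ √(2 + u * z).re := Real.one_le_sqrt.mpr (one_le_re_two_add_mul hz hu)
          _ ≤ _ := sqrt_re_le_re_cpow_half _
    _ = (∫ u in (0 : ℝ)..1, (√u : ℂ) * (2 + u * z) ^ ((1 : ℂ) / 2)).re :=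
        intervalIntegral.intervalIntegral_re (hcont.intervalIntegrable_of_Icc zero_le_one)
    _ ≤ _ := re_le_norm _

theorem norm_integral_le (z : ℂ) :
    ‖∫ u in (0 : ℝ)..1, (√u : ℂ) * (2 + u * z) ^ ((1 : ℂ) / 2)‖ ≤ 2 / 3 * √(2 + ‖z‖) := by
  calc _ ≤ ∫ u in (0 : ℝ)..1, √u * √(2 + ‖z‖) := by
        refine intervalIntegral.norm_integral_le_of_norm_le zero_le_one
          (.of_forall fun u hu ↦ ?_)
          ((Real.continuous_sqrt.mul continuous_const).intervalIntegrable _ _)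
        rw [norm_mul, norm_cpow_half, norm_real, Real.norm_of_nonneg (Real.sqrt_nonneg u)]
        gcongr
        calc ‖2 + u * z‖ ≤ 2 + u * ‖z‖ := by
              simpa [abs_of_pos hu.1] using norm_add_le (2 : ℂ) (u * z)
          _ ≤ 2 + ‖z‖ := by nlinarith [hu.2, norm_nonneg z]
    _ = 2 / 3 * √(2 + ‖z‖) := by rw [intervalIntegral.integral_mul_const, integral_sqrt_zero_one]

lemma norm_xi_one_add {z : ℂ} (hz : -1 ≤ z.re) :
    ‖xi (1 + z)‖ = ‖z‖ ^ ((3 : ℝ) / 2) *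
      ‖∫ u in (0 : ℝ)..1, (√u : ℂ) * (2 + u * z) ^ ((1 : ℂ) / 2)‖ := by
  rw [xi_one_add_eq_mul_integral hz, norm_mul, norm_mul, norm_cpow_half, Real.sqrt_eq_rpow,
    ← Real.rpow_one_add' (norm_nonneg z) (by norm_num)]
  norm_num

lemma neg_one_le_re_sub_one {t : ℂ} (ht : 0 ≤ t.re) : -1 ≤ (t - 1).re := by
  simpa using ht

theorem two_thirds_mul_rpow_le_norm_xi {t : ℂ} (ht : 0 ≤ t.re) :
    2 / 3 * ‖t - 1‖ ^ ((3 : ℝ) / 2) ≤ ‖xi t‖ := by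
  have h := norm_xi_one_add (neg_one_le_re_sub_one ht)
  rw [add_sub_cancel] at h
  rw [h, mul_comm]
  gcongr
  exact two_thirds_le_norm_integral (neg_one_le_re_sub_one ht)

theorem norm_xi_le {t : ℂ} (ht : 0 ≤ t.re) :
    ‖xi t‖ ≤ 2 / 3 * √(2 + ‖t - 1‖) * ‖t - 1‖ ^ ((3 : ℝ) / 2) := by
  have h := norm_xi_one_add (neg_one_le_re_sub_one ht)
  rw [add_sub_cancel] at h
  rw [h, mul_comm]
  gcongr
  exact norm_integral_le (t - 1)

lemma re_ofReal_mul_exp_neg_mul_I (r θ : ℝ) :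
    ((r : ℂ) * exp (-(θ : ℂ) * I)).re = r * Real.cos θ := by
  simp [exp_re]

lemma im_ofReal_mul_exp_neg_mul_I (r θ : ℝ) :
    ((r : ℂ) * exp (-(θ : ℂ) * I)).im = -(r * Real.sin θ) := by
  simp [exp_im]

lemma sin_le_norm_ofReal_mul_exp_sub_one (r : ℝ) {θ : ℝ} (hθ : 0 ≤ Real.sin θ) :
    Real.sin θ ≤ ‖(r : ℂ) * exp (-(θ : ℂ) * I) - 1‖ := by
  refine (sq_le_sq₀ hθ (norm_nonneg _)).mp ?_
  rw [Complex.sq_norm, normSq_apply, sub_re, sub_im, re_ofReal_mul_exp_neg_mul_I,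
    im_ofReal_mul_exp_neg_mul_I, one_re, one_im]
  nlinarith [Real.sin_sq_add_cos_sq θ, sq_nonneg (r - Real.cos θ)]

theorem stmt0 (θ r : ℝ) (hθ : θ ∈ Set.Icc 0 (π/2)) (hr : 0 ≤ r)
    (t : ℂ) (ht : t = (r : ℂ) * Complex.exp (-(θ : ℂ) * Complex.I)) :
    (2/3 : ℝ) * (Real.sin θ) ^ ((3 : ℝ)/2) ≤ ‖xi t‖ ∧
    (‖t - 1‖ ≤ 1 →
      (2/3 : ℝ) * ‖t - 1‖ ^ ((3 : ℝ)/2) ≤ ‖xi t‖ ∧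
      ‖xi t‖ ≤ 2 * ‖t - 1‖ ^ ((3 : ℝ)/2)) := by
  obtain ⟨hθ0, hθ1⟩ := hθ
  have hsin : 0 ≤ Real.sin θ := Real.sin_nonneg_of_nonneg_of_le_pi hθ0 (by linarith [pi_pos])
  have hcos : 0 ≤ Real.cos θ := Real.cos_nonneg_of_mem_Icc ⟨by linarith [pi_pos], hθ1⟩
  have hre : 0 ≤ t.re := by rw [ht, re_ofReal_mul_exp_neg_mul_I]; positivity
  have hsin_le : Real.sin θ ≤ ‖t - 1‖ := ht ▸ sin_le_norm_ofReal_mul_exp_sub_one r hsin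
  have hlow := two_thirds_mul_rpow_le_norm_xi hre
  refine ⟨le_trans (by gcongr) hlow, fun ht1 ↦ ⟨hlow, (norm_xi_le hre).trans ?_⟩⟩
  have : √(2 + ‖t - 1‖) ≤ 3 := by rw [Real.sqrt_le_left] <;> nlinarith
  gcongr
  linarith
end

section
/- Let θ ∈ (0, π/2) and r > 0, set t = r·e^{−iθ}, and let φ = −arg(t − 1) (principal argument). Then the principal argument of e^{−iθ}·R(t) (which equals the r-derivative ∂_r ξ(r·e^{−iθ}) = e^{−iθ}·√(t²−1) with the appropriate branch) satisfies: arg(e^{−iθ}·R(t)) ∈ [−π/2 − θ, −2θ) and arg(e^{−iθ}·R(t)) ∈ (−φ/2 − 3θ/2, −φ/2 − θ]. -/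
open Complex Real

/-!
With `α = arg (t - 1)` and `β = arg (t + 1)`, both in `(-π, 0)` since `Im t < 0`, the principal
square roots give `arg R(t) = (α + β)/2`. Because `Im (t²) < 0` as well, `α + β = arg (t² - 1)`
with no `2π` correction, so `arg (e^{-iθ} R(t)) = -θ + arg (t² - 1)/2`. Everything then follows
from the monotonicity `arg z < arg (z + 1)` on the lower half-plane, applied to `z = t² - 1`
(giving `arg (t² - 1) < arg t² = -2θ`) and to `z = t` (giving `-θ < β < 0`).
-/

namespace Complex

theorem arg_exp_of_im_mem {z : ℂ} (hz : z.im ∈ Set.Ioc (-π) π) : arg (exp z) = z.im := by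
  rwa [arg_exp, toIocMod_eq_self, show -π + 2 * π = π by ring]

theorem cpow_one_half_ne_zero {w : ℂ} (hw : w ≠ 0) : w ^ (1 / 2 : ℂ) ≠ 0 :=
  cpow_ne_zero_iff.2 (Or.inl hw)

theorem arg_cpow_one_half {w : ℂ} (hw : w ≠ 0) : arg (w ^ (1 / 2 : ℂ)) = arg w / 2 := by
  have him : (log w * (1 / 2)).im = arg w / 2 := by simp [log_im, div_eq_mul_inv]
  have hmem : (log w * (1 / 2)).im ∈ Set.Ioc (-π) π := by
    rw [him]; constructor <;> linarith [neg_pi_lt_arg w, arg_le_pi w, pi_pos]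
  rw [cpow_def_of_ne_zero hw, arg_exp_of_im_mem hmem, him]

theorem norm_mul_norm_mul_sin_arg_sub (z w : ℂ) :
    ‖z‖ * ‖w‖ * Real.sin (arg w - arg z) = z.re * w.im - z.im * w.re := by
  rw [Real.sin_sub, ← norm_mul_cos_arg z, ← norm_mul_sin_arg z, ← norm_mul_cos_arg w,
    ← norm_mul_sin_arg w]
  ring

theorem norm_mul_norm_mul_sin_arg_add (z w : ℂ) :
    ‖z‖ * ‖w‖ * Real.sin (arg z + arg w) = (z * w).im := by
  rw [Real.sin_add, mul_im, ← norm_mul_cos_arg z, ← norm_mul_sin_arg z, ← norm_mul_cos_arg w,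
    ← norm_mul_sin_arg w]
  ring

theorem arg_lt_arg_of_im_neg {z w : ℂ} (hz : z.im < 0) (hzw : 0 < z.re * w.im - z.im * w.re) :
    arg z < arg w := by
  have hsin : 0 < Real.sin (arg w - arg z) := by
    rw [← norm_mul_norm_mul_sin_arg_sub] at hzw
    exact pos_of_mul_pos_right hzw (by positivity)
  by_contra! hle
  have := Real.sin_nonpos_of_nonpos_of_neg_pi_le (x := arg w - arg z) (by linarith)
    (by linarith [neg_pi_lt_arg w, arg_neg_iff.2 hz])
  linarith

theorem arg_lt_arg_add_one {z : ℂ} (hz : z.im < 0) : arg z < arg (z + 1) :=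
  arg_lt_arg_of_im_neg hz (by simp; linarith)

theorem arg_mul_of_im_neg {z w : ℂ} (hz : z.im < 0) (hw : w.im < 0) (hzw : (z * w).im < 0) :
    arg (z * w) = arg z + arg w := by
  have hz₀ : z ≠ 0 := fun h => by simp [h] at hz
  have hw₀ : w ≠ 0 := fun h => by simp [h] at hw
  refine arg_mul hz₀ hw₀ ⟨?_, by linarith [arg_neg_iff.2 hz, arg_neg_iff.2 hw, pi_pos]⟩
  by_contra! hle
  -- `arg z + arg w ∈ (-2π, -π]` would put `z * w` in the closed upper half-plane.
  have hsin : 0 ≤ Real.sin (arg z + arg w) := by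
    rw [← Real.sin_add_two_pi]
    exact Real.sin_nonneg_of_nonneg_of_le_pi (by linarith [neg_pi_lt_arg z, neg_pi_lt_arg w])
      (by linarith)
  rw [← norm_mul_norm_mul_sin_arg_add] at hzw
  nlinarith [mul_nonneg (mul_nonneg (norm_nonneg z) (norm_nonneg w)) hsin]

end Complex

theorem Rb_ne_zero {t : ℂ} (h₁ : t - 1 ≠ 0) (h₂ : t + 1 ≠ 0) : Rb t ≠ 0 :=
  mul_ne_zero (cpow_one_half_ne_zero h₁) (cpow_one_half_ne_zero h₂)

theorem arg_Rb {t : ℂ} (h₁ : t - 1 ≠ 0) (h₂ : t + 1 ≠ 0) :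
    arg (Rb t) = (arg (t - 1) + arg (t + 1)) / 2 := by
  have hmem : arg ((t - 1) ^ (1 / 2 : ℂ)) + arg ((t + 1) ^ (1 / 2 : ℂ)) ∈ Set.Ioc (-π) π := by
    rw [arg_cpow_one_half h₁, arg_cpow_one_half h₂]
    constructor <;> linarith [neg_pi_lt_arg (t - 1), arg_le_pi (t - 1), neg_pi_lt_arg (t + 1),
      arg_le_pi (t + 1)]
  rw [Rb, arg_mul (cpow_one_half_ne_zero h₁) (cpow_one_half_ne_zero h₂) hmem,
    arg_cpow_one_half h₁, arg_cpow_one_half h₂, add_div]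

theorem arg_add_arg_eq_arg_sq_sub_one {t : ℂ} (ht : t.im < 0) (ht2 : (t ^ 2 - 1).im < 0) :
    arg (t - 1) + arg (t + 1) = arg (t ^ 2 - 1) := by
  rw [show t ^ 2 - 1 = (t - 1) * (t + 1) by ring] at ht2 ⊢
  exact (arg_mul_of_im_neg (by simpa using ht) (by simpa using ht) ht2).symm

theorem stmt2 (θ r : ℝ) (hθ : θ ∈ Set.Ioo 0 (π/2)) (hr : 0 < r)
    (t : ℂ) (ht : t = (r : ℂ) * Complex.exp (-(θ : ℂ) * Complex.I))
    (φ : ℝ) (hφ : φ = - Complex.arg (t - 1)) :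
    Complex.arg (Complex.exp (-(θ : ℂ) * Complex.I) * Rb t) ∈
      Set.Ico (-(π/2) - θ) (-(2*θ)) ∧
    Complex.arg (Complex.exp (-(θ : ℂ) * Complex.I) * Rb t) ∈
      Set.Ioc (-(φ/2) - 3*θ/2) (-(φ/2) - θ) := by
  obtain ⟨hθ₀, hθπ⟩ := hθ
  have harg_e : arg (exp (-(θ : ℂ) * I)) = -θ := by
    rw [arg_exp_of_im_mem] <;> simp; constructor <;> linarith [pi_pos]
  have harg_t : arg t = -θ := by rw [ht, arg_real_mul _ hr, harg_e]
  have harg_t2 : arg (t ^ 2) = -(2 * θ) := by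
    rw [ht, mul_pow, ← ofReal_pow, arg_real_mul _ (by positivity), ← Complex.exp_nat_mul,
      arg_exp_of_im_mem] <;> simp; constructor <;> linarith [pi_pos]
  have him_t : t.im < 0 := arg_neg_iff.1 (by linarith)
  have him_t2 : (t ^ 2 - 1).im < 0 := by simpa using arg_neg_iff.1 (by linarith : arg (t ^ 2) < 0)
  have h₁ : t - 1 ≠ 0 := fun h => by simp [sub_eq_zero.1 h] at him_t
  have h₂ : t + 1 ≠ 0 := fun h => by simp [eq_neg_of_add_eq_zero_left h] at him_t
  have hsum := arg_add_arg_eq_arg_sq_sub_one him_t him_t2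
  have hmem : arg (exp (-(θ : ℂ) * I)) + arg (Rb t) ∈ Set.Ioc (-π) π := by
    rw [harg_e, arg_Rb h₁ h₂, hsum]
    constructor <;> linarith [neg_pi_lt_arg (t ^ 2 - 1), arg_le_pi (t ^ 2 - 1)]
  have harg : arg (exp (-(θ : ℂ) * I) * Rb t) = -θ + (arg (t - 1) + arg (t + 1)) / 2 := by
    rw [arg_mul (exp_ne_zero _) (Rb_ne_zero h₁ h₂) hmem, harg_e, arg_Rb h₁ h₂]
  have hupper : arg (t - 1) + arg (t + 1) < -(2 * θ) := by
    simpa [hsum, harg_t2] using arg_lt_arg_add_one him_t2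
  have hlower : -π < arg (t - 1) + arg (t + 1) := hsum ▸ neg_pi_lt_arg _
  have hβ : -θ < arg (t + 1) := harg_t ▸ arg_lt_arg_add_one him_t
  have hβ' : arg (t + 1) < 0 := arg_neg_iff.2 (by simpa using him_t)
  rw [harg, hφ]
  exact ⟨⟨by linarith, by linarith⟩, by linarith, by linarith⟩
end

section
/- Let θ ∈ (0, π/2) and r > 0, and set t = r·e^{−iθ}. Then Im(e^{iθ}·R(t)) < 0 and Re(e^{iθ}·R(t)) > 0. (Here e^{iθ}·R(t) = e^{2iθ}·∂_r ξ(r·e^{−iθ}); consequently, along the ray arg t = −θ, Re(e^{2iθ}·ξ) is strictly increasing in r and Im(e^{2iθ}·ξ) is strictly decreasing in r.) -/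
open Complex Real

theorem stmt4 (θ r : ℝ) (hθ : θ ∈ Set.Ioo 0 (π/2)) (hr : 0 < r)
    (t : ℂ) (ht : t = (r : ℂ) * Complex.exp (-(θ : ℂ) * Complex.I)) :
    (Complex.exp ((θ : ℂ) * Complex.I) * Rb t).im < 0 ∧
    0 < (Complex.exp ((θ : ℂ) * Complex.I) * Rb t).re := by
  obtain ⟨hθ0, hθ1⟩ := hθ
  have hsin : 0 < Real.sin θ := Real.sin_pos_of_pos_of_lt_pi hθ0 (by linarith [Real.pi_pos])
  -- imaginary part of t
  have htim : t.im = -(r * Real.sin θ) := by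
    rw [ht]
    simp [Complex.mul_im, Complex.exp_im, Real.sin_neg]
  have htim' : t.im < 0 := by
    have := mul_pos hr hsin
    rw [htim]; linarith
  have h1im : (t - 1).im < 0 := by simpa using htim'
  have h2im : (t + 1).im < 0 := by simpa using htim'
  have h1ne : t - 1 ≠ 0 := fun h => by simp [h] at h1im
  have h2ne : t + 1 ≠ 0 := fun h => by simp [h] at h2im
  set c : ℂ := (θ : ℂ) * Complex.I + (1/2 : ℂ) * Complex.log (t - 1)
      + (1/2 : ℂ) * Complex.log (t + 1) with hc
  have hexp : Complex.exp ((θ : ℂ) * Complex.I) * Rb t = Complex.exp c := by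
    rw [Rb, Complex.cpow_def_of_ne_zero h1ne, Complex.cpow_def_of_ne_zero h2ne, hc,
      Complex.exp_add, Complex.exp_add, mul_comm ((1:ℂ)/2), mul_comm ((1:ℂ)/2)]
    ring
  -- imaginary part of c
  set φ : ℝ := c.im with hφ
  have hφval : φ = θ + (t - 1).arg / 2 + (t + 1).arg / 2 := by
    rw [hφ, hc]
    simp [Complex.add_im, Complex.mul_im, Complex.log_im, Complex.log_re]
    ring
  have harg1l : -π < (t - 1).arg := Complex.neg_pi_lt_arg _
  have harg1u : (t - 1).arg < 0 := Complex.arg_neg_iff.2 h1im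
  have harg2l : -π < (t + 1).arg := Complex.neg_pi_lt_arg _
  have harg2u : (t + 1).arg < 0 := Complex.arg_neg_iff.2 h2im
  have hφu : φ < θ := by rw [hφval]; linarith
  have hφl : θ - π < φ := by rw [hφval]; linarith
  -- square of exp c
  have hsq : Complex.exp c * Complex.exp c = (r : ℂ)^2 - Complex.exp (((2*θ : ℝ) : ℂ) * Complex.I) := by
    rw [← hexp]
    have hRb : Rb t * Rb t = (t - 1) * (t + 1) := by
      rw [Rb]
      have e1 : (t-1) ^ ((1:ℂ)/2) * (t-1) ^ ((1:ℂ)/2) = t - 1 := by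
        rw [← Complex.cpow_add _ _ h1ne]; norm_num
      have e2 : (t+1) ^ ((1:ℂ)/2) * (t+1) ^ ((1:ℂ)/2) = t + 1 := by
        rw [← Complex.cpow_add _ _ h2ne]; norm_num
      calc (t-1) ^ ((1:ℂ)/2) * (t+1) ^ ((1:ℂ)/2) * ((t-1) ^ ((1:ℂ)/2) * (t+1) ^ ((1:ℂ)/2))
          = ((t-1) ^ ((1:ℂ)/2) * (t-1) ^ ((1:ℂ)/2)) * ((t+1) ^ ((1:ℂ)/2) * (t+1) ^ ((1:ℂ)/2)) := by ring
        _ = (t - 1) * (t + 1) := by rw [e1, e2]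
    have key : Complex.exp ((θ:ℂ)*Complex.I) * Rb t * (Complex.exp ((θ:ℂ)*Complex.I) * Rb t)
        = Complex.exp ((θ:ℂ)*Complex.I) * Complex.exp ((θ:ℂ)*Complex.I) * ((t-1)*(t+1)) := by
      rw [← hRb]; ring
    rw [key, ← Complex.exp_add, ht]
    have hE2 : Complex.exp ((θ:ℂ)*Complex.I + (θ:ℂ)*Complex.I)
        * (Complex.exp (-(θ:ℂ)*Complex.I) * Complex.exp (-(θ:ℂ)*Complex.I)) = 1 := by
      rw [← Complex.exp_add, ← Complex.exp_add]
      have : (θ:ℂ)*Complex.I + (θ:ℂ)*Complex.I + (-(θ:ℂ)*Complex.I + -(θ:ℂ)*Complex.I) = 0 := by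
        ring
      rw [this, Complex.exp_zero]
    have hE1 : Complex.exp ((θ:ℂ)*Complex.I + (θ:ℂ)*Complex.I)
        = Complex.exp (((2*θ:ℝ):ℂ) * Complex.I) := by
      congr 1; push_cast; ring
    linear_combination (r:ℂ)^2 * hE2 - hE1
  -- imaginary parts
  have h2θsin : 0 < Real.sin (2*θ) := Real.sin_pos_of_pos_of_lt_pi (by linarith) (by linarith)
  have hsqim : (Complex.exp c * Complex.exp c).im = -Real.sin (2*θ) := by
    rw [hsq, Complex.sub_im, Complex.exp_ofReal_mul_I_im,
      show ((r:ℂ)^2) = ((r^2 : ℝ):ℂ) by push_cast; ring, Complex.ofReal_im]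
    ring
  have hsqim2 : (Complex.exp c * Complex.exp c).im = Real.exp ((c+c).re) * Real.sin (2*φ) := by
    rw [← Complex.exp_add, Complex.exp_im, Complex.add_im, hφ]; ring_nf
  have hsin2φ : Real.sin (2*φ) < 0 := by
    nlinarith [Real.exp_pos ((c+c).re), hsqim2.symm.trans hsqim]
  have hφneg : φ < 0 := by
    by_contra h
    push_neg at h
    have : 0 ≤ Real.sin (2*φ) :=
      Real.sin_nonneg_of_nonneg_of_le_pi (by linarith) (by linarith)
    linarith
  have hφgt : -(π/2) < φ := by
    by_contra h
    push_neg at h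
    have h2 : Real.sin (2*φ + 2*π) = Real.sin (2*φ) := Real.sin_add_two_pi _
    have : 0 ≤ Real.sin (2*φ + 2*π) :=
      Real.sin_nonneg_of_nonneg_of_le_pi (by linarith) (by linarith)
    linarith
  have hsinφ : Real.sin φ < 0 := Real.sin_neg_of_neg_of_neg_pi_lt hφneg (by linarith)
  have hcosφ : 0 < Real.cos φ := Real.cos_pos_of_mem_Ioo ⟨hφgt, by linarith⟩
  rw [hexp]
  constructor
  · rw [Complex.exp_im]
    exact mul_neg_of_pos_of_neg (Real.exp_pos _) hsinφ
  · rw [Complex.exp_re]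
    exact mul_pos (Real.exp_pos _) hcosφ
end

section
/- For every α ∈ ℝ and every δ ∈ (0, π) there exists a constant C > 0 such that for all real x, y with w = x + iy ≠ 0 and |arg w| ≤ π − δ/2 (principal argument), and for all ε ≥ (4/3)·sin(δ/2): ∫_x^∞ e^{−εt} · (1 + |t + iy|)^{−2α/3} · |t + iy|^{−1/3} dt ≤ C · e^{−εx} · (1 + |w|)^{−(2α+1)/3}. -/
/-!
Write `r t = ‖t + y i‖`, `A = ‖x + y i‖`, `c = sin (δ / 2)` and `γ = -(2α + 1) / 3`. For `t ≥ x`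
we have `c A ≤ r t` (when `x < 0` the angle condition gives `c A ≤ |y|`), `|t| ≤ r t` and
`r t ≤ A + (t - x)`. Hence `c (1 + A) ≤ 1 + r t ≤ (1 + A) (1 + (t - x))`, so `(1 + r t) ^ γ` is
comparable to `(1 + A) ^ γ` up to a polynomial factor in `t - x`, which half of the decay
`e^{-ε (t - x)}` absorbs. The rest of the integrand, `(1 + r t) ^ (1/3) * r t ^ (-1/3)`, is at most
`1 + |t| ^ (-1/3)`, whose singularity is integrable:
`∫_{t ≥ x} e^{-b (t - x)} (1 + |t| ^ (-1/3)) ≤ 2 / b + ∫_{-1}^{1} |t| ^ (-1/3)` uniformly in `x`.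
-/

open Real MeasureTheory Set

lemma one_add_rpow_le_mul_exp {N b s : ℝ} (hN : 0 ≤ N) (hb : 0 < b) (hs : 0 ≤ s) :
    (1 + s) ^ N ≤ (1 + N / b) ^ N * exp (b * s) := by
  rcases hN.eq_or_lt with rfl | hN
  · simpa using one_le_exp (by positivity : 0 ≤ b * s)
  have hlin : 1 + s ≤ (1 + N / b) * exp (b * s / N) := calc
    1 + s ≤ (1 + N / b) * (b * s / N + 1) := by
      rw [show (1 + N / b) * (b * s / N + 1) = 1 + s + (b * s / N + N / b) by field_simp; ring]
      have : 0 ≤ b * s / N + N / b := by positivity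
      linarith
    _ ≤ (1 + N / b) * exp (b * s / N) := by gcongr; exact add_one_le_exp _
  calc (1 + s) ^ N ≤ ((1 + N / b) * exp (b * s / N)) ^ N := by gcongr
    _ = (1 + N / b) ^ N * exp (b * s) := by
      rw [mul_rpow (by positivity) (exp_pos _).le, ← exp_mul, div_mul_cancel₀ _ hN.ne']

lemma rpow_le_of_mul_le_of_le_mul {c u v L γ : ℝ} (hc0 : 0 < c) (hc1 : c ≤ 1) (hv : 0 < v)
    (hL : 1 ≤ L) (hlo : c * v ≤ u) (hhi : u ≤ v * L) :
    u ^ γ ≤ c ^ (-|γ|) * v ^ γ * L ^ max γ 0 := by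
  rcases le_or_gt 0 γ with hγ | hγ
  · rw [abs_of_nonneg hγ, max_eq_left hγ]
    calc u ^ γ ≤ (v * L) ^ γ := by gcongr; nlinarith
      _ = 1 * v ^ γ * L ^ γ := by rw [mul_rpow hv.le (by positivity), one_mul]
      _ ≤ c ^ (-γ) * v ^ γ * L ^ γ := by
        gcongr; exact one_le_rpow_of_pos_of_le_one_of_nonpos hc0 hc1 (by linarith)
  · rw [abs_of_neg hγ, neg_neg, max_eq_right hγ.le, rpow_zero, mul_one,
      ← mul_rpow hc0.le hv.le]
    exact rpow_le_rpow_of_nonpos (by positivity) hlo hγ.le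

lemma one_add_rpow_mul_rpow_neg_le {r u β p : ℝ} (hu : 0 < u) (hur : u ≤ r) (hp0 : 0 ≤ p)
    (hp1 : p ≤ 1) : (1 + r) ^ β * r ^ (-p) ≤ (1 + r) ^ (β - p) * (1 + u ^ (-p)) := by
  have hr : 0 < r := hu.trans_le hur
  have hsub : (1 + r) ^ p ≤ 1 + r ^ p := by
    simpa using rpow_add_le_add_rpow zero_le_one hr.le hp0 hp1
  calc (1 + r) ^ β * r ^ (-p) = (1 + r) ^ (β - p) * ((1 + r) ^ p * r ^ (-p)) := by
        rw [← mul_assoc, ← rpow_add (by positivity), sub_add_cancel]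
    _ ≤ (1 + r) ^ (β - p) * ((1 + r ^ p) * r ^ (-p)) := by gcongr
    _ = (1 + r) ^ (β - p) * (1 + r ^ (-p)) := by
        rw [add_mul, one_mul, ← rpow_add hr, add_neg_cancel, rpow_zero, add_comm 1 (r ^ (-p))]
    _ ≤ (1 + r) ^ (β - p) * (1 + u ^ (-p)) := by
        gcongr (1 + r) ^ (β - p) * (1 + ?_)
        exact rpow_le_rpow_of_nonpos hu hur (by linarith)

namespace Complex

lemma sin_mul_norm_le_abs_im {z : ℂ} {θ : ℝ} (hθ : 0 ≤ θ) (harg : |arg z| ≤ π - θ)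
    (hre : z.re < 0) : Real.sin θ * ‖z‖ ≤ |z.im| := by
  have hπ2 : π / 2 < |arg z| := lt_of_not_ge fun h => hre.not_ge (abs_arg_le_pi_div_two_iff.1 h)
  have hsin : Real.sin θ ≤ |Real.sin (arg z)| := by
    rw [abs_sin_eq_sin_abs_of_abs_le_pi (abs_arg_le_pi z), ← Real.sin_pi_sub |arg z|]
    exact Real.sin_le_sin_of_le_of_le_pi_div_two (by linarith [pi_pos]) (by linarith) (by linarith)
  calc Real.sin θ * ‖z‖ ≤ |Real.sin (arg z)| * ‖z‖ := by gcongr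
    _ = |z.im| := by rw [← norm_mul_sin_arg z, abs_mul, abs_norm, mul_comm]

lemma sin_mul_norm_le_norm_add_ofReal {z : ℂ} {θ s : ℝ} (hθ : 0 ≤ θ)
    (harg : |arg z| ≤ π - θ) (hs : 0 ≤ s) : Real.sin θ * ‖z‖ ≤ ‖z + s‖ := by
  rcases le_or_gt 0 z.re with hre | hre
  · have hz : ‖z‖ ≤ ‖z + s‖ := by
      rw [norm_def, norm_def]
      apply sqrt_le_sqrt
      simp only [normSq_apply, add_re, ofReal_re, add_im, ofReal_im, add_zero]
      nlinarith
    calc Real.sin θ * ‖z‖ ≤ 1 * ‖z‖ := by gcongr; exact Real.sin_le_one θ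
      _ ≤ ‖z + s‖ := by rwa [one_mul]
  · calc Real.sin θ * ‖z‖ ≤ |z.im| := sin_mul_norm_le_abs_im hθ harg hre
      _ = |(z + s).im| := by simp
      _ ≤ ‖z + s‖ := abs_im_le_norm _

end Complex

lemma intervalIntegrable_abs_rpow {r : ℝ} (hr : -1 < r) (a b : ℝ) :
    IntervalIntegrable (fun t => |t| ^ r) volume a b := by
  have hpos : ∀ c, 0 ≤ c → IntervalIntegrable (fun t => |t| ^ r) volume 0 c := fun c hc =>
    (intervalIntegral.intervalIntegrable_rpow' hr).congr fun t ht => by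
      rw [uIoc_of_le hc] at ht
      simp [abs_of_pos ht.1]
  have hall : ∀ c, IntervalIntegrable (fun t => |t| ^ r) volume 0 c := by
    intro c
    rcases le_total 0 c with hc | hc
    · exact hpos c hc
    · simpa using (IntervalIntegrable.iff_comp_neg (by simp)).1 (hpos (-c) (by linarith))
  exact (hall a).symm.trans (hall b)

lemma exp_neg_mul_sub_eq_mul_exp (b x : ℝ) :
    (fun t => exp (-(b * (t - x)))) = fun t => exp (-b * t) * exp (b * x) := by
  funext t
  rw [← exp_add]
  ring_nf

lemma integrableOn_Ici_exp_neg_mul_sub {b : ℝ} (hb : 0 < b) (x : ℝ) :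
    IntegrableOn (fun t => exp (-(b * (t - x)))) (Ici x) := by
  rw [integrableOn_Ici_iff_integrableOn_Ioi, exp_neg_mul_sub_eq_mul_exp]
  exact (integrableOn_exp_mul_Ioi (neg_neg_of_pos hb) x).mul_const _

lemma setIntegral_Ici_exp_neg_mul_sub {b : ℝ} (hb : 0 < b) (x : ℝ) :
    ∫ t in Ici x, exp (-(b * (t - x))) = b⁻¹ := by
  rw [integral_Ici_eq_integral_Ioi, exp_neg_mul_sub_eq_mul_exp, integral_mul_const,
    integral_exp_mul_Ioi (neg_neg_of_pos hb), neg_div_neg_eq, div_mul_eq_mul_div, ← exp_add]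
  simp

lemma exp_neg_mul_sub_mul_one_add_abs_rpow_le {b p x t : ℝ} (hb : 0 ≤ b) (hp : 0 ≤ p)
    (hxt : x ≤ t) :
    exp (-(b * (t - x))) * (1 + |t| ^ (-p)) ≤
      2 * exp (-(b * (t - x))) + (Icc (-1) 1).indicator (fun t => |t| ^ (-p)) t := by
  have hexp : exp (-(b * (t - x))) ≤ 1 := exp_le_one_iff.2 (by nlinarith)
  by_cases ht : t ∈ Icc (-1) 1
  · rw [indicator_of_mem ht]
    nlinarith [exp_pos (-(b * (t - x))), rpow_nonneg (abs_nonneg t) (-p)]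
  · rw [indicator_of_notMem ht]
    have h1 : 1 ≤ |t| := by
      by_contra! h
      exact ht (abs_le.1 h.le)
    nlinarith [exp_pos (-(b * (t - x))), rpow_le_one_of_one_le_of_nonpos h1 (neg_nonpos.2 hp)]

lemma integrableOn_Icc_abs_rpow_neg {p : ℝ} (hp : p < 1) :
    IntegrableOn (fun t : ℝ => |t| ^ (-p)) (Icc (-1) 1) :=
  (intervalIntegrable_iff_integrableOn_Icc_of_le (by norm_num)).1
    (intervalIntegrable_abs_rpow (by linarith) _ _)

lemma integrableOn_Ici_exp_neg_mul_sub_add_indicator {b p : ℝ} (hb : 0 < b) (hp : p < 1)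
    (x : ℝ) :
    IntegrableOn (fun t => 2 * exp (-(b * (t - x))) +
      (Icc (-1) 1).indicator (fun t => |t| ^ (-p)) t) (Ici x) :=
  ((integrableOn_Ici_exp_neg_mul_sub hb x).const_mul 2).add
    ((integrableOn_Icc_abs_rpow_neg hp).integrable_indicator measurableSet_Icc).integrableOn

lemma integrableOn_Ici_exp_neg_mul_sub_mul_one_add_abs_rpow {b p : ℝ} (hb : 0 < b)
    (hp0 : 0 ≤ p) (hp1 : p < 1) (x : ℝ) :
    IntegrableOn (fun t => exp (-(b * (t - x))) * (1 + |t| ^ (-p))) (Ici x) := by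
  refine (integrableOn_Ici_exp_neg_mul_sub_add_indicator hb hp1 x).mono'
    (by fun_prop : Measurable _).aestronglyMeasurable ?_
  filter_upwards [ae_restrict_mem measurableSet_Ici] with t ht
  rw [norm_of_nonneg (by positivity)]
  exact exp_neg_mul_sub_mul_one_add_abs_rpow_le hb.le hp0 ht

lemma setIntegral_Ici_exp_neg_mul_sub_mul_one_add_abs_rpow_le {b p : ℝ} (hb : 0 < b)
    (hp0 : 0 ≤ p) (hp1 : p < 1) (x : ℝ) :
    ∫ t in Ici x, exp (-(b * (t - x))) * (1 + |t| ^ (-p)) ≤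
      2 * b⁻¹ + ∫ t in Icc (-1) 1, |t| ^ (-p) := by
  have hind := (integrableOn_Icc_abs_rpow_neg hp1).integrable_indicator measurableSet_Icc
  calc ∫ t in Ici x, exp (-(b * (t - x))) * (1 + |t| ^ (-p))
      ≤ ∫ t in Ici x, (2 * exp (-(b * (t - x))) +
          (Icc (-1) 1).indicator (fun t => |t| ^ (-p)) t) :=
        setIntegral_mono_on (integrableOn_Ici_exp_neg_mul_sub_mul_one_add_abs_rpow hb hp0 hp1 x)
          (integrableOn_Ici_exp_neg_mul_sub_add_indicator hb hp1 x) measurableSet_Ici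
          fun t ht => exp_neg_mul_sub_mul_one_add_abs_rpow_le hb.le hp0 ht
    _ = 2 * b⁻¹ + ∫ t in Ici x, (Icc (-1) 1).indicator (fun t => |t| ^ (-p)) t := by
        rw [integral_add ((integrableOn_Ici_exp_neg_mul_sub hb x).const_mul 2) hind.integrableOn,
          integral_const_mul, setIntegral_Ici_exp_neg_mul_sub hb x]
    _ ≤ 2 * b⁻¹ + ∫ t in Icc (-1) 1, |t| ^ (-p) := by
        rw [← integral_indicator measurableSet_Icc]
        exact add_le_add_right (setIntegral_le_integral hind
          (Filter.Eventually.of_forall fun t => indicator_nonneg (fun t _ => by positivity) t)) _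

/-- The bound is claimed only for `t ≠ 0`: there `|t| ^ (-p)` takes the junk value `0`. -/
lemma exp_mul_one_add_rpow_mul_rpow_neg_le {β p c b ε x A t r : ℝ} (hp0 : 0 ≤ p)
    (hp1 : p ≤ 1) (hc0 : 0 < c) (hc1 : c ≤ 1) (hb : 0 < b) (hbε : b ≤ ε) (hA : 0 ≤ A) (hxt : x ≤ t)
    (ht : t ≠ 0) (hcr : c * A ≤ r) (htr : |t| ≤ r) (hrA : r ≤ A + (t - x)) :
    exp (-ε * t) * (1 + r) ^ β * r ^ (-p) ≤
      c ^ (-|β - p|) * (1 + max (β - p) 0 / (b / 2)) ^ max (β - p) 0 * exp (-ε * x) *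
        (1 + A) ^ (β - p) * (exp (-(b / 2 * (t - x))) * (1 + |t| ^ (-p))) := by
  set γ := β - p
  set N := max γ 0
  have hr : 0 ≤ r := (abs_nonneg t).trans htr
  have hsing : (1 + r) ^ β * r ^ (-p) ≤ (1 + r) ^ γ * (1 + |t| ^ (-p)) :=
    one_add_rpow_mul_rpow_neg_le (abs_pos.2 ht) htr hp0 hp1
  have hpow : (1 + r) ^ γ ≤ c ^ (-|γ|) * (1 + A) ^ γ * (1 + (t - x)) ^ N :=
    rpow_le_of_mul_le_of_le_mul hc0 hc1 (by linarith) (by linarith) (by nlinarith)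
      (by nlinarith)
  have hpoly : (1 + (t - x)) ^ N ≤ (1 + N / (b / 2)) ^ N * exp (b / 2 * (t - x)) :=
    one_add_rpow_le_mul_exp (le_max_right _ _) (by positivity) (by linarith)
  have hexp :
      exp (-ε * t) * exp (b / 2 * (t - x)) ≤ exp (-ε * x) * exp (-(b / 2 * (t - x))) := by
    rw [← exp_add, ← exp_add, exp_le_exp]
    nlinarith
  calc exp (-ε * t) * (1 + r) ^ β * r ^ (-p) = exp (-ε * t) * ((1 + r) ^ β * r ^ (-p)) :=
        mul_assoc _ _ _
    _ ≤ exp (-ε * t) * ((1 + r) ^ γ * (1 + |t| ^ (-p))) := by gcongr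
    _ ≤ exp (-ε * t) * ((c ^ (-|γ|) * (1 + A) ^ γ *
          ((1 + N / (b / 2)) ^ N * exp (b / 2 * (t - x)))) * (1 + |t| ^ (-p))) := by
        gcongr
        exact hpow.trans (by gcongr)
    _ = c ^ (-|γ|) * (1 + N / (b / 2)) ^ N * (1 + A) ^ γ *
          (exp (-ε * t) * exp (b / 2 * (t - x))) * (1 + |t| ^ (-p)) := by ring
    _ ≤ c ^ (-|γ|) * (1 + N / (b / 2)) ^ N * (1 + A) ^ γ *
          (exp (-ε * x) * exp (-(b / 2 * (t - x)))) * (1 + |t| ^ (-p)) := by gcongr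
    _ = _ := by ring

lemma exists_setIntegral_Ici_exp_mul_one_add_rpow_mul_rpow_neg_le {β p c b : ℝ} (hp0 : 0 ≤ p)
    (hp1 : p < 1) (hc0 : 0 < c) (hc1 : c ≤ 1) (hb : 0 < b) :
    ∃ C > 0, ∀ (x A ε : ℝ) (r : ℝ → ℝ), 0 ≤ A → b ≤ ε →
      (∀ t, x ≤ t → c * A ≤ r t ∧ |t| ≤ r t ∧ r t ≤ A + (t - x)) →
      ∫ t in Ici x, exp (-ε * t) * (1 + r t) ^ β * r t ^ (-p) ≤
        C * exp (-ε * x) * (1 + A) ^ (β - p) := by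
  set K := c ^ (-|β - p|) * (1 + max (β - p) 0 / (b / 2)) ^ max (β - p) 0
  have hK : 0 < K := by positivity
  set D := 2 * (b / 2)⁻¹ + ∫ t in Icc (-1) 1, |t| ^ (-p)
  have hD : 0 < D := add_pos_of_pos_of_nonneg (by positivity)
    (setIntegral_nonneg measurableSet_Icc fun t _ => by positivity)
  refine ⟨K * D, mul_pos hK hD, fun x A ε r hA hbε hr => ?_⟩
  calc ∫ t in Ici x, exp (-ε * t) * (1 + r t) ^ β * r t ^ (-p)
      ≤ ∫ t in Ici x, K * exp (-ε * x) * (1 + A) ^ (β - p) *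
          (exp (-(b / 2 * (t - x))) * (1 + |t| ^ (-p))) := by
        refine integral_mono_of_nonneg ?_ ((integrableOn_Ici_exp_neg_mul_sub_mul_one_add_abs_rpow
          (half_pos hb) hp0 hp1 x).const_mul _) ?_
        · filter_upwards [ae_restrict_mem measurableSet_Ici] with t ht
          have := (abs_nonneg t).trans (hr t ht).2.1
          positivity
        · filter_upwards [ae_restrict_mem measurableSet_Ici,
            ae_restrict_of_ae (Measure.ae_ne volume 0)] with t ht ht0
          obtain ⟨hcr, htr, hrA⟩ := hr t ht
          exact exp_mul_one_add_rpow_mul_rpow_neg_le hp0 hp1.le hc0 hc1 hb hbε hA ht ht0 hcr htr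
            hrA
    _ = K * exp (-ε * x) * (1 + A) ^ (β - p) *
          ∫ t in Ici x, exp (-(b / 2 * (t - x))) * (1 + |t| ^ (-p)) := integral_const_mul _ _
    _ ≤ K * exp (-ε * x) * (1 + A) ^ (β - p) * D := by
        gcongr
        exact setIntegral_Ici_exp_neg_mul_sub_mul_one_add_abs_rpow_le (half_pos hb) hp0 hp1 x
    _ = K * D * exp (-ε * x) * (1 + A) ^ (β - p) := by ring

theorem exists_setIntegral_Ici_exp_mul_norm_rpow_le {β p θ b : ℝ}
    (hp0 : 0 ≤ p) (hp1 : p < 1) (hθ : θ ∈ Ioo 0 π) (hb : 0 < b) :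
    ∃ C > 0, ∀ x y ε : ℝ, |Complex.arg ((x : ℂ) + (y : ℂ) * Complex.I)| ≤ π - θ →
      b ≤ ε →
      ∫ t in Ici x, exp (-ε * t) * (1 + ‖(t : ℂ) + (y : ℂ) * Complex.I‖) ^ β *
          ‖(t : ℂ) + (y : ℂ) * Complex.I‖ ^ (-p) ≤
        C * exp (-ε * x) * (1 + ‖(x : ℂ) + (y : ℂ) * Complex.I‖) ^ (β - p) := by
  obtain ⟨C, hC, hint⟩ := exists_setIntegral_Ici_exp_mul_one_add_rpow_mul_rpow_neg_le
    (β := β) hp0 hp1 (sin_pos_of_pos_of_lt_pi hθ.1 hθ.2) (sin_le_one θ) hb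
  refine ⟨C, hC, fun x y ε harg hbε => hint x _ ε _ (norm_nonneg _) hbε fun t hxt => ?_⟩
  have hshift : (t : ℂ) + (y : ℂ) * Complex.I =
      (x : ℂ) + (y : ℂ) * Complex.I + ((t - x : ℝ) : ℂ) := by
    push_cast
    ring
  refine ⟨?_, by simpa using Complex.abs_re_le_norm ((t : ℂ) + (y : ℂ) * Complex.I), ?_⟩
  · rw [hshift]
    exact Complex.sin_mul_norm_le_norm_add_ofReal hθ.1.le harg (sub_nonneg.2 hxt)
  · rw [hshift]
    refine (norm_add_le _ _).trans_eq ?_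
    rw [Complex.norm_real, Real.norm_of_nonneg (sub_nonneg.2 hxt)]

theorem stmt14 (α δ : ℝ) (hδ : δ ∈ Set.Ioo 0 π) :
    ∃ C > 0, ∀ x y ε : ℝ, (x : ℂ) + (y : ℂ) * Complex.I ≠ 0 →
      |Complex.arg ((x : ℂ) + (y : ℂ) * Complex.I)| ≤ π - δ/2 →
      (4/3 : ℝ) * Real.sin (δ/2) ≤ ε →
      (∫ t in Set.Ici x,
          Real.exp (-ε * t) *
            (1 + ‖(t : ℂ) + (y : ℂ) * Complex.I‖) ^ (-(2*α)/3) *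
            (‖(t : ℂ) + (y : ℂ) * Complex.I‖) ^ (-(1 : ℝ)/3)) ≤
        C * Real.exp (-ε * x) *
          (1 + ‖(x : ℂ) + (y : ℂ) * Complex.I‖) ^ (-(2*α + 1)/3) := by
  have hθ : δ / 2 ∈ Ioo 0 π := ⟨by linarith [hδ.1], by linarith [hδ.2, pi_pos]⟩
  obtain ⟨C, hC, hbound⟩ := exists_setIntegral_Ici_exp_mul_norm_rpow_le
    (β := -(2 * α) / 3) (p := 1 / 3) (b := 4 / 3 * sin (δ / 2)) (by norm_num) (by norm_num) hθ
    (by have := sin_pos_of_pos_of_lt_pi hθ.1 hθ.2; positivity)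
  refine ⟨C, hC, fun x y ε _ harg hε => ?_⟩
  rw [show -(2 * α + 1) / 3 = -(2 * α) / 3 - 1 / 3 by ring,
    show (-1 : ℝ) / 3 = -(1 / 3) by ring]
  exact hbound x y ε harg hε
end
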